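/- Let π : A → B be a surjective quasi-isomorphism of cdgas and let Q be the pullback of B ⊗ (t,dt) → B ← A along ev₁ ⊗ id and π. Then the map A ⊗ (t,dt) → Q induced by π ⊗ id_{(t,dt)} and id ⊗ ev₁ is a surjective quasi-isomorphism. -/

import Mathlib

/-! STATEMENT 16: Let `π : A → B` be a surjective quasi-isomorphism of cdgas and let `Q`
be the pullback of `B ⊗ (t,dt) → B ← A` along `ev₁ ⊗ id` and `π`, i.e.
`Q = {(h,a) : (h,a) ∈ (B ⊗ (t,dt)) × A, (id ⊗ ev₁)(h) = π(a)}`.  Then the map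
`A ⊗ (t,dt) → Q`, `ω ↦ ((π ⊗ id)(ω), (id ⊗ ev₁)(ω))`, is a surjective quasi-isomorphism.

`A ⊗ (t,dt)` is modelled concretely as pairs `(P(t), Q(t))` of polynomials with
coefficients in `A` (representing `P(t) + Q(t)·dt`), with the Koszul-signed multiplication
and differential expressed through the sign operator `ε = (−1)^{deg}` (given as data with
its defining property).  Quasi-isomorphisms are expressed elementwise. -/

structure CDGA where
  carrier : Type
  [ring : Ring carrier]
  [alg : Algebra ℚ carrier]
  grading : ℕ → Submodule ℚ carrier
  isInternal : DirectSum.IsInternal grading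
  one_mem : (1 : carrier) ∈ grading 0
  mul_mem : ∀ {i j : ℕ} {a b : carrier}, a ∈ grading i → b ∈ grading j → a * b ∈ grading (i + j)
  gcomm : ∀ {i j : ℕ} {a b : carrier}, a ∈ grading i → b ∈ grading j →
    a * b = ((-1 : ℚ) ^ (i * j)) • (b * a)
  d : carrier →ₗ[ℚ] carrier
  d_mem : ∀ {i : ℕ} {a : carrier}, a ∈ grading i → d a ∈ grading (i + 1)
  d_sq : ∀ a, d (d a) = 0
  leibniz : ∀ {i : ℕ} (a b : carrier), a ∈ grading i →
    d (a * b) = d a * b + ((-1 : ℚ) ^ i) • (a * d b)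

attribute [instance] CDGA.ring CDGA.alg

structure CDGAHom (A B : CDGA) where
  toFun : A.carrier →ₐ[ℚ] B.carrier
  grading_mem : ∀ {n : ℕ} {x : A.carrier}, x ∈ A.grading n → toFun x ∈ B.grading n
  comm_d : ∀ x, toFun (A.d x) = B.d (toFun x)

/-- applying a map to the coefficients of a polynomial. -/
noncomputable def pmapH {R S : Type} [Ring R] [Ring S] (f : R → S) (h : f 0 = 0)
    (p : Polynomial R) : Polynomial S := ⟨AddMonoidAlgebra.ofCoeff (Finsupp.mapRange f h p.toFinsupp.coeff)⟩

abbrev ATc (A : CDGA) : Type := Polynomial A.carrier × Polynomial A.carrier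

noncomputable def atMul (A : CDGA) (ε : A.carrier →ₗ[ℚ] A.carrier) (x y : ATc A) : ATc A :=
  (x.1 * y.1, x.1 * y.2 + x.2 * pmapH ε (map_zero ε) y.1)

noncomputable def atD (A : CDGA) (ε : A.carrier →ₗ[ℚ] A.carrier) (x : ATc A) : ATc A :=
  (pmapH A.d (map_zero A.d) x.1,
   pmapH ε (map_zero ε) (Polynomial.derivative x.1) + pmapH A.d (map_zero A.d) x.2)

def atDeg (A : CDGA) (n : ℕ) (x : ATc A) : Prop :=
  (∀ k, x.1.coeff k ∈ A.grading n) ∧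
  (match n with
   | 0 => x.2 = 0
   | (m + 1) => ∀ k, x.2.coeff k ∈ A.grading m)

/-- the evaluation `id ⊗ ev₁ : A ⊗ (t,dt) → A`, `t ↦ 1`, `dt ↦ 0`. -/
noncomputable def ev1 (A : CDGA) (x : ATc A) : A.carrier := x.1.eval 1

/-- elementwise quasi-isomorphism of cdgas. -/
def IsQuasiIso (A B : CDGA) (f : CDGAHom A B) : Prop :=
  (∀ b ∈ B.grading 0, B.d b = 0 → ∃ a ∈ A.grading 0, A.d a = 0 ∧ f.toFun a = b) ∧
  (∀ a ∈ A.grading 0, A.d a = 0 → f.toFun a = 0 → a = 0) ∧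
  (∀ n : ℕ, ∀ b ∈ B.grading (n + 1), B.d b = 0 →
    ∃ a ∈ A.grading (n + 1), A.d a = 0 ∧ ∃ b' ∈ B.grading n, f.toFun a - b = B.d b') ∧
  (∀ n : ℕ, ∀ a ∈ A.grading (n + 1), A.d a = 0 →
    (∃ b' ∈ B.grading n, f.toFun a = B.d b') → ∃ a' ∈ A.grading n, A.d a' = a)

/-- the pullback `Q` of `B ⊗ (t,dt) → B ← A`. -/
noncomputable def Qset (A B : CDGA) (π : CDGAHom A B) : Set (ATc B × A.carrier) :=
  {z | ev1 B z.1 = π.toFun z.2}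

/-- the differential of `Q`. -/
noncomputable def dQ (A B : CDGA) (εB : B.carrier →ₗ[ℚ] B.carrier)
    (z : ATc B × A.carrier) : ATc B × A.carrier :=
  (atD B εB z.1, A.d z.2)

/-- the degree-`n` part of `Q`. -/
def QDeg (A B : CDGA) (n : ℕ) (z : ATc B × A.carrier) : Prop :=
  atDeg B n z.1 ∧ z.2 ∈ A.grading n

/-- the multiplication of `(B ⊗ (t,dt)) × A`. -/
noncomputable def qmul (A B : CDGA) (εB : B.carrier →ₗ[ℚ] B.carrier)
    (z z' : ATc B × A.carrier) : ATc B × A.carrier :=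
  (atMul B εB z.1 z'.1, z.2 * z'.2)

/-- the comparison map `A ⊗ (t,dt) → (B ⊗ (t,dt)) × A`,
`ω ↦ ((π ⊗ id)(ω), (id ⊗ ev₁)(ω))`. -/
noncomputable def Phi (A B : CDGA) (π : CDGAHom A B) (ω : ATc A) : ATc B × A.carrier :=
  ((pmapH π.toFun (map_zero π.toFun) ω.1, pmapH π.toFun (map_zero π.toFun) ω.2), ev1 A ω)

/-! Both `ev₁ : A ⊗ (t,dt) → A` and the projection `Q → A` are quasi-isomorphisms, by the
Poincaré lemma for `(t,dt)`: a degree-0 cocycle `P` is constant, and a cocycle `P + Q dt` of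
positive degree `n + 1` is the constant `P(1)` plus the coboundary of `(-1)ⁿ ∫₁ᵗ Q`. So every
cohomological question about `Φ` reduces to constants, on which `Φ a = ((π a, 0), a)`.
Surjectivity: lift `P` and `Q` coefficientwise through `π` and correct the constant term so that
the value at `1` becomes `a`. -/

open Polynomial

section PolynomialLemmas

variable {R S : Type}

section CoeffMap

variable [Ring R] [Ring S]

lemma coeff_pmapH (f : R → S) (h : f 0 = 0) (p : R[X]) (k : ℕ) :
    (pmapH f h p).coeff k = f (p.coeff k) := rfl

lemma pmapH_zero (f : R → S) (h : f 0 = 0) : pmapH f h (0 : R[X]) = 0 := by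
  ext k; simp [coeff_pmapH, h]

lemma pmapH_C (f : R → S) (h : f 0 = 0) (x : R) : pmapH f h (C x) = C (f x) := by
  ext k; rw [coeff_pmapH, coeff_C, coeff_C]; split_ifs <;> simp [h]

lemma pmapH_pmapH_comm {T U : Type} [Ring T] [Ring U] {f : S → U} {g : R → S} {f' : R → T}
    {g' : T → U} (hf : f 0 = 0) (hg : g 0 = 0) (hf' : f' 0 = 0) (hg' : g' 0 = 0)
    (hcomm : ∀ x, f (g x) = g' (f' x)) (p : R[X]) :
    pmapH f hf (pmapH g hg p) = pmapH g' hg' (pmapH f' hf' p) := by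
  ext k; exact hcomm _

variable {F : Type} [FunLike F R S]

lemma pmapH_add [AddMonoidHomClass F R S] (f : F) (h : f 0 = 0) (p q : R[X]) :
    pmapH f h (p + q) = pmapH f h p + pmapH f h q := by
  ext k; simp [coeff_pmapH]

lemma pmapH_neg [AddMonoidHomClass F R S] (f : F) (h : f 0 = 0) (p : R[X]) :
    pmapH f h (-p) = -pmapH f h p := by
  ext k; simp [coeff_pmapH]

lemma pmapH_smul [Module ℚ R] [Module ℚ S] [LinearMapClass F ℚ R S] (f : F) (h : f 0 = 0)
    (c : ℚ) (p : R[X]) : pmapH f h (c • p) = c • pmapH f h p := by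
  ext k; simp [coeff_pmapH]

lemma pmapH_eq_map [RingHomClass F R S] (f : F) (h : f 0 = 0) (p : R[X]) :
    pmapH f h p = p.map (f : R →+* S) := by
  ext k; rw [coeff_pmapH, coeff_map]; rfl

lemma eval_one_pmapH [AddMonoidHomClass F R S] (f : F) (h : f 0 = 0) (p : R[X]) :
    (pmapH f h p).eval 1 = f (p.eval 1) := by
  simp only [eval_eq_sum_range' (n := p.natDegree + 1) (Nat.lt_succ_self _),
    eval_eq_sum_range' (n := p.natDegree + 1) (p := pmapH f h p) (Nat.lt_succ_of_le
      (natDegree_le_iff_coeff_eq_zero.2 fun _ hN => by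
        rw [coeff_pmapH, coeff_eq_zero_of_natDegree_lt hN, map_zero])),
    one_pow, mul_one, coeff_pmapH, map_sum]

lemma derivative_pmapH [Module ℚ R] [Module ℚ S] [LinearMapClass F ℚ R S]
    (f : F) (h : f 0 = 0) (p : R[X]) :
    derivative (pmapH f h p) = pmapH f h (derivative p) := by
  ext k
  simp only [coeff_pmapH, coeff_derivative, ← Nat.cast_add_one, ← nsmul_eq_mul', map_nsmul]

end CoeffMap

lemma eval_one_mul [Ring R] (p q : R[X]) : (p * q).eval 1 = p.eval 1 * q.eval 1 :=
  eval₂_mul_noncomm _ _ fun _ => Commute.one_right _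

lemma eval_one_mem [Ring R] [Module ℚ R] {M : Submodule ℚ R} {p : R[X]}
    (h : ∀ k, p.coeff k ∈ M) : p.eval 1 ∈ M := by
  rw [eval_eq_sum_range]
  exact Submodule.sum_mem _ fun i _ => by simpa using h i

lemma derivative_coeff_mem [Ring R] [Module ℚ R] {M : Submodule ℚ R} {p : R[X]}
    (hp : ∀ k, p.coeff k ∈ M) (k : ℕ) : (derivative p).coeff k ∈ M := by
  rw [coeff_derivative, ← Nat.cast_add_one, ← nsmul_eq_mul']
  exact M.toAddSubmonoid.nsmul_mem (hp (k + 1)) _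

lemma coeff_C_mem [Ring R] [Module ℚ R] {M : Submodule ℚ R} {c : R} (hc : c ∈ M) (k : ℕ) :
    (C c).coeff k ∈ M := by
  rw [coeff_C]; split_ifs
  exacts [hc, M.zero_mem]

lemma eq_C_eval_of_derivative_eq_zero [Ring R] [Module ℚ R] {p : R[X]}
    (hp : derivative p = 0) (x : R) : p = C (p.eval x) := by
  have := IsAddTorsionFree.of_module_rat R
  rw [derivative_eq_zero] at hp
  rw [eq_C_of_natDegree_eq_zero hp, eval_C]

end PolynomialLemmas

namespace Polynomial

variable {R : Type} [Ring R] [Module ℚ R]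

noncomputable def integral (p : R[X]) : R[X] :=
  p.sum fun k a => monomial (k + 1) (((k : ℚ) + 1)⁻¹ • a)

lemma coeff_integral_zero (p : R[X]) : (integral p).coeff 0 = 0 := by
  simp [integral, coeff_monomial, sum_def]

lemma coeff_integral_succ (p : R[X]) (k : ℕ) :
    (integral p).coeff (k + 1) = ((k : ℚ) + 1)⁻¹ • p.coeff k := by
  rw [integral, coeff_sum, sum_def]
  simp only [coeff_monomial, add_left_inj, Finset.sum_ite_eq']
  split_ifs with hk
  · rfl
  · rw [notMem_support_iff.1 hk, smul_zero]

lemma integral_coeff_mem {M : Submodule ℚ R} {p : R[X]} (hp : ∀ k, p.coeff k ∈ M) (k : ℕ) :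
    (integral p).coeff k ∈ M := by
  cases k with
  | zero => rw [coeff_integral_zero]; exact M.zero_mem
  | succ k => rw [coeff_integral_succ]; exact M.smul_mem _ (hp k)

lemma derivative_integral (p : R[X]) : derivative (integral p) = p := by
  ext k
  have hk : ((k : ℚ) + 1) ≠ 0 := by positivity
  calc (derivative (integral p)).coeff k
      = ((k : ℚ) + 1)⁻¹ • ((k + 1 : ℕ) • p.coeff k) := by
        rw [coeff_derivative, coeff_integral_succ, smul_mul_assoc, nsmul_eq_mul',
          Nat.cast_succ]
    _ = p.coeff k := by
        rw [← Nat.cast_smul_eq_nsmul ℚ, smul_smul, Nat.cast_succ, inv_mul_cancel₀ hk, one_smul]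

end Polynomial

lemma CDGA.linearMap_ext {A : CDGA} {M : Type} [AddCommGroup M] [Module ℚ M]
    {f g : A.carrier →ₗ[ℚ] M} (h : ∀ n, ∀ a ∈ A.grading n, f a = g a) : f = g := by
  have hle : ⨆ n, A.grading n ≤ LinearMap.eqLocus f g := iSup_le fun n a ha => h n a ha
  rw [A.isInternal.submodule_iSup_eq_top] at hle
  exact LinearMap.ext fun a => hle Submodule.mem_top

def IsGradingSign (A : CDGA) (ε : A.carrier →ₗ[ℚ] A.carrier) : Prop :=
  ∀ (n : ℕ) (a : A.carrier), a ∈ A.grading n → ε a = ((-1 : ℚ) ^ n) • a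

section Sign

variable {A : CDGA} {ε : A.carrier →ₗ[ℚ] A.carrier}

lemma pmapH_eps_of_coeff_mem (hε : IsGradingSign A ε) {n : ℕ} {p : A.carrier[X]}
    (hp : ∀ k, p.coeff k ∈ A.grading n) :
    pmapH ε (map_zero ε) p = ((-1 : ℚ) ^ n) • p := by
  ext k; rw [coeff_pmapH, coeff_smul, hε n _ (hp k)]

lemma CDGAHom.map_eps (hε : IsGradingSign A ε) {B : CDGA} {εB : B.carrier →ₗ[ℚ] B.carrier}
    (hεB : IsGradingSign B εB) (π : CDGAHom A B) (a : A.carrier) :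
    π.toFun (ε a) = εB (π.toFun a) := by
  refine LinearMap.congr_fun (f := π.toFun.toLinearMap ∘ₗ ε) (g := εB ∘ₗ π.toFun.toLinearMap)
    (CDGA.linearMap_ext fun n x hx => ?_) a
  simp [hε n x hx, hεB n _ (π.grading_mem hx)]

end Sign

section Poincare

variable {A : CDGA} {ε : A.carrier →ₗ[ℚ] A.carrier}

lemma atDeg_mk_zero {n : ℕ} {P : A.carrier[X]} :
    atDeg A n (P, 0) ↔ ∀ k, P.coeff k ∈ A.grading n := by
  cases n <;> simp [atDeg]

lemma atD_add (ω ω' : ATc A) : atD A ε (ω + ω') = atD A ε ω + atD A ε ω' := by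
  simp only [atD, Prod.fst_add, Prod.snd_add, derivative_add, pmapH_add, Prod.mk_add_mk]
  abel_nf

lemma atD_neg (ω : ATc A) : atD A ε (-ω) = -atD A ε ω := by
  simp only [atD, Prod.fst_neg, Prod.snd_neg, derivative_neg, pmapH_neg, Prod.neg_mk, neg_add]

lemma atD_C_zero (a : A.carrier) : atD A ε (C a, 0) = (C (A.d a), 0) := by
  simp only [atD, pmapH_C, derivative_C, pmapH_zero, add_zero]

lemma eq_C_ev1_of_atDeg_zero (hε : IsGradingSign A ε)
    {ω : ATc A} (hω : atDeg A 0 ω) (hd : atD A ε ω = 0) : ω = (C (ev1 A ω), 0) := by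
  obtain ⟨P, Q⟩ := ω
  obtain ⟨hP, rfl : Q = 0⟩ := hω
  have hP' : pmapH ε (map_zero ε) (derivative P) + pmapH A.d (map_zero A.d) 0 = 0 :=
    congrArg Prod.snd hd
  rw [pmapH_zero, add_zero, pmapH_eps_of_coeff_mem hε (derivative_coeff_mem hP), pow_zero,
    one_smul] at hP'
  exact Prod.ext (eq_C_eval_of_derivative_eq_zero hP' 1) rfl

lemma exists_eq_C_ev1_add_atD (hε : IsGradingSign A ε)
    {n : ℕ} {ω : ATc A} (hω : atDeg A (n + 1) ω) (hd : atD A ε ω = 0) :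
    ∃ T : A.carrier[X], (∀ k, T.coeff k ∈ A.grading n) ∧ T.eval 1 = 0 ∧
      ω = (C (ev1 A ω), 0) + atD A ε (T, 0) := by
  obtain ⟨P, Q⟩ := ω
  obtain ⟨hP, hQ : ∀ k, Q.coeff k ∈ A.grading n⟩ := hω
  have hcoc : pmapH ε (map_zero ε) (derivative P) + pmapH A.d (map_zero A.d) Q = 0 :=
    congrArg Prod.snd hd
  set s : ℚ := (-1) ^ n
  have hss : s * s = 1 := by rw [← pow_add, ← two_mul, pow_mul]; norm_num
  have hdQ : pmapH A.d (map_zero A.d) Q = s • derivative P := by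
    rw [pmapH_eps_of_coeff_mem hε (derivative_coeff_mem hP), pow_succ, mul_neg_one,
      neg_smul, neg_add_eq_zero] at hcoc
    exact hcoc.symm
  set I := integral Q
  set T := s • (I - C (I.eval 1))
  have hT' : derivative T = s • Q := by
    simp only [T, derivative_smul, derivative_sub, derivative_C, sub_zero, I,
      derivative_integral]
  refine ⟨T, fun k => ?_, by simp [T], Prod.ext ?_ ?_⟩
  · simp only [T, coeff_smul, coeff_sub, coeff_C]
    refine (A.grading n).smul_mem _ ((A.grading n).sub_mem (integral_coeff_mem hQ k) ?_)
    split_ifs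
    exacts [eval_one_mem (integral_coeff_mem hQ), (A.grading n).zero_mem]
  · have hD : derivative (P - pmapH A.d (map_zero A.d) T) = 0 := by
      rw [derivative_sub, derivative_pmapH, hT', pmapH_smul, hdQ, smul_smul, hss, one_smul,
        sub_self]
    have hD1 : (P - pmapH A.d (map_zero A.d) T).eval 1 = P.eval 1 := by
      rw [eval_sub, eval_one_pmapH, show T.eval 1 = 0 by simp [T], map_zero, sub_zero]
    show P = C (P.eval 1) + pmapH A.d (map_zero A.d) T
    rw [← hD1, ← eq_C_eval_of_derivative_eq_zero hD, sub_add_cancel]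
  · show Q = 0 + (pmapH ε (map_zero ε) (derivative T) + pmapH A.d (map_zero A.d) 0)
    rw [hT', pmapH_smul, pmapH_eps_of_coeff_mem hε hQ, smul_smul, hss, one_smul, pmapH_zero,
      add_zero, zero_add]

end Poincare

section Comparison

variable {A B : CDGA} (π : CDGAHom A B)

lemma CDGAHom.pmapH_toFun_eq_map (p : A.carrier[X]) :
    pmapH π.toFun (map_zero π.toFun) p = p.map (π.toFun : A.carrier →+* B.carrier) :=
  pmapH_eq_map π.toFun _ p

lemma Phi_mem_Qset (ω : ATc A) : Phi A B π ω ∈ Qset A B π :=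
  eval_one_pmapH π.toFun _ ω.1

lemma Phi_one : Phi A B π (1, 0) = ((1, 0), 1) := by
  simp [Phi, ev1, CDGAHom.pmapH_toFun_eq_map, pmapH_zero]

lemma Phi_add (ω ω' : ATc A) : Phi A B π (ω + ω') = Phi A B π ω + Phi A B π ω' := by
  simp [Phi, ev1, pmapH_add]

lemma Phi_C_zero (a : A.carrier) : Phi A B π (C a, 0) = ((C (π.toFun a), 0), a) := by
  simp [Phi, ev1, pmapH_C, pmapH_zero]

variable {εA : A.carrier →ₗ[ℚ] A.carrier} {εB : B.carrier →ₗ[ℚ] B.carrier}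

lemma CDGAHom.map_pmapH_eps (hεA : IsGradingSign A εA) (hεB : IsGradingSign B εB)
    (p : A.carrier[X]) :
    (pmapH εA (map_zero εA) p).map (π.toFun : A.carrier →+* B.carrier) =
      pmapH εB (map_zero εB) (p.map (π.toFun : A.carrier →+* B.carrier)) := by
  simp only [← CDGAHom.pmapH_toFun_eq_map]
  exact pmapH_pmapH_comm _ _ _ _ (π.map_eps hεA hεB) p

lemma Phi_atMul (hεA : IsGradingSign A εA) (hεB : IsGradingSign B εB) (ω ω' : ATc A) :
    Phi A B π (atMul A εA ω ω') = qmul A B εB (Phi A B π ω) (Phi A B π ω') := by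
  refine Prod.ext (Prod.ext ?_ ?_) (eval_one_mul ω.1 ω'.1)
  · simp [Phi, atMul, qmul, CDGAHom.pmapH_toFun_eq_map]
  · simp only [Phi, atMul, qmul, CDGAHom.pmapH_toFun_eq_map, Polynomial.map_add, Polynomial.map_mul,
      π.map_pmapH_eps hεA hεB]

lemma Phi_atD (hεA : IsGradingSign A εA) (hεB : IsGradingSign B εB) (ω : ATc A) :
    Phi A B π (atD A εA ω) = dQ A B εB (Phi A B π ω) := by
  have hd : ∀ p : A.carrier[X], pmapH π.toFun (map_zero π.toFun) (pmapH A.d (map_zero A.d) p) =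
      pmapH B.d (map_zero B.d) (pmapH π.toFun (map_zero π.toFun) p) :=
    pmapH_pmapH_comm _ _ _ _ π.comm_d
  refine Prod.ext (Prod.ext (hd ω.1) ?_) (eval_one_pmapH A.d _ ω.1)
  simp only [Phi, atD, dQ, pmapH_add, hd, CDGAHom.pmapH_toFun_eq_map, π.map_pmapH_eps hεA hεB,
    derivative_map]

end Comparison

section Cohomology

variable {A B : CDGA} {εA : A.carrier →ₗ[ℚ] A.carrier} {εB : B.carrier →ₗ[ℚ] B.carrier}

lemma eq_zero_of_ev1_eq_zero (hεA : IsGradingSign A εA) {ω : ATc A} (hω : atDeg A 0 ω)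
    (hd : atD A εA ω = 0) (hev : ev1 A ω = 0) : ω = 0 := by
  rw [eq_C_ev1_of_atDeg_zero hεA hω hd, hev, C_0, Prod.mk_zero_zero]

lemma exists_atD_eq_of_ev1_eq_d (hεA : IsGradingSign A εA) {n : ℕ} {ω : ATc A}
    (hω : atDeg A (n + 1) ω) (hd : atD A εA ω = 0) {c : A.carrier} (hc : c ∈ A.grading n)
    (hev : ev1 A ω = A.d c) : ∃ ω' : ATc A, atDeg A n ω' ∧ atD A εA ω' = ω := by
  obtain ⟨T, hT, -, hωT⟩ := exists_eq_C_ev1_add_atD hεA hω hd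
  refine ⟨(T + C c, 0), atDeg_mk_zero.2 fun k => ?_, ?_⟩
  · rw [coeff_add]; exact add_mem (hT k) (coeff_C_mem hc k)
  · rw [← add_zero (0 : A.carrier[X]), ← Prod.mk_add_mk, atD_add, atD_C_zero, ← hev, add_comm,
      ← hωT]

variable (π : CDGAHom A B)

lemma exists_Phi_eq (hπ : Function.Surjective π.toFun) {z : ATc B × A.carrier}
    (hz : z ∈ Qset A B π) : ∃ ω : ATc A, Phi A B π ω = z := by
  obtain ⟨⟨P, Q⟩, a⟩ := z
  obtain ⟨P₀, rfl⟩ := map_surjective (π.toFun : A.carrier →+* B.carrier) hπ P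
  obtain ⟨Q₀, rfl⟩ := map_surjective (π.toFun : A.carrier →+* B.carrier) hπ Q
  have hπa : π.toFun (P₀.eval 1) = π.toFun a := (eval_one_map _ P₀).symm.trans hz
  refine ⟨(P₀ + C (a - P₀.eval 1), Q₀), ?_⟩
  simp [Phi, ev1, CDGAHom.pmapH_toFun_eq_map, hπa]

lemma exists_cocycle_Phi_eq_of_QDeg_zero (hεB : IsGradingSign B εB) {z : ATc B × A.carrier}
    (hz : z ∈ Qset A B π) (hdeg : QDeg A B 0 z) (hd : dQ A B εB z = 0) :
    ∃ ω : ATc A, atDeg A 0 ω ∧ atD A εA ω = 0 ∧ Phi A B π ω = z := by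
  obtain ⟨ω₁, a⟩ := z
  obtain ⟨hω₁, ha⟩ : atDeg B 0 ω₁ ∧ a ∈ A.grading 0 := hdeg
  have hω₁C := eq_C_ev1_of_atDeg_zero hεB hω₁ (congrArg Prod.fst hd)
  have hda : A.d a = 0 := congrArg Prod.snd hd
  refine ⟨(C a, 0), atDeg_mk_zero.2 (coeff_C_mem ha), ?_, ?_⟩
  · rw [atD_C_zero, hda, C_0, Prod.mk_zero_zero]
  · rw [Phi_C_zero, hω₁C, show ev1 B ω₁ = π.toFun a from hz]

lemma exists_cocycle_Phi_sub_eq_dQ (hεB : IsGradingSign B εB) {n : ℕ} {z : ATc B × A.carrier}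
    (hz : z ∈ Qset A B π) (hdeg : QDeg A B (n + 1) z) (hd : dQ A B εB z = 0) :
    ∃ ω : ATc A, atDeg A (n + 1) ω ∧ atD A εA ω = 0 ∧
      ∃ w ∈ Qset A B π, QDeg A B n w ∧ Phi A B π ω - z = dQ A B εB w := by
  obtain ⟨ω₁, a⟩ := z
  obtain ⟨hω₁, ha⟩ : atDeg B (n + 1) ω₁ ∧ a ∈ A.grading (n + 1) := hdeg
  obtain ⟨T, hT, hT1, hω₁T⟩ := exists_eq_C_ev1_add_atD hεB hω₁ (congrArg Prod.fst hd)
  have hda : A.d a = 0 := congrArg Prod.snd hd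
  refine ⟨(C a, 0), atDeg_mk_zero.2 (coeff_C_mem ha), ?_, ((-T, 0), 0), ?_,
    ⟨atDeg_mk_zero.2 fun k => ?_, zero_mem _⟩, ?_⟩
  · rw [atD_C_zero, hda, C_0, Prod.mk_zero_zero]
  · simp [Qset, ev1, hT1]
  · rw [coeff_neg]; exact neg_mem (hT k)
  · have hdT : atD B εB (T, 0) = ω₁ - (C (π.toFun a), 0) := by
      rw [← show ev1 B ω₁ = π.toFun a from hz]; exact eq_sub_of_add_eq' hω₁T.symm
    rw [Phi_C_zero, Prod.mk_sub_mk, sub_self, ← neg_zero, ← Prod.neg_mk, dQ, atD_neg, hdT,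
      neg_sub, map_zero, neg_zero]

end Cohomology

theorem stmt_16_general (A B : CDGA)
    (εA : A.carrier →ₗ[ℚ] A.carrier)
    (hεA : ∀ (n : ℕ) (a : A.carrier), a ∈ A.grading n → εA a = ((-1 : ℚ) ^ n) • a)
    (εB : B.carrier →ₗ[ℚ] B.carrier)
    (hεB : ∀ (n : ℕ) (b : B.carrier), b ∈ B.grading n → εB b = ((-1 : ℚ) ^ n) • b)
    (π : CDGAHom A B) (hπsurj : Function.Surjective π.toFun) :
    -- `Φ` is a morphism of cdgas into the pullback `Q` …
    (∀ ω : ATc A, Phi A B π ω ∈ Qset A B π) ∧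
    (Phi A B π (1, 0) = ((1, 0), 1)) ∧
    (∀ ω ω' : ATc A, Phi A B π (ω + ω') = Phi A B π ω + Phi A B π ω') ∧
    (∀ ω ω' : ATc A,
      Phi A B π (atMul A εA ω ω') = qmul A B εB (Phi A B π ω) (Phi A B π ω')) ∧
    (∀ ω : ATc A, Phi A B π (atD A εA ω) = dQ A B εB (Phi A B π ω)) ∧
    -- … it is surjective onto `Q` …
    (∀ z ∈ Qset A B π, ∃ ω : ATc A, Phi A B π ω = z) ∧
    -- … and it is a quasi-isomorphism onto `Q` (elementwise, in each degree):
    (∀ z ∈ Qset A B π, QDeg A B 0 z → dQ A B εB z = 0 →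
      ∃ ω : ATc A, atDeg A 0 ω ∧ atD A εA ω = 0 ∧ Phi A B π ω = z) ∧
    (∀ ω : ATc A, atDeg A 0 ω → atD A εA ω = 0 → Phi A B π ω = 0 → ω = 0) ∧
    (∀ n : ℕ, ∀ z ∈ Qset A B π, QDeg A B (n + 1) z → dQ A B εB z = 0 →
      ∃ ω : ATc A, atDeg A (n + 1) ω ∧ atD A εA ω = 0 ∧
        ∃ w ∈ Qset A B π, QDeg A B n w ∧ Phi A B π ω - z = dQ A B εB w) ∧
    (∀ n : ℕ, ∀ ω : ATc A, atDeg A (n + 1) ω → atD A εA ω = 0 →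
      (∃ w ∈ Qset A B π, QDeg A B n w ∧ Phi A B π ω = dQ A B εB w) →
      ∃ ω' : ATc A, atDeg A n ω' ∧ atD A εA ω' = ω) :=
  ⟨Phi_mem_Qset π, Phi_one π, Phi_add π, Phi_atMul π hεA hεB, Phi_atD π hεA hεB,
    fun _ hz => exists_Phi_eq π hπsurj hz,
    fun _ hz hdeg hd => exists_cocycle_Phi_eq_of_QDeg_zero π hεB hz hdeg hd,
    fun _ hω hd hΦ => eq_zero_of_ev1_eq_zero hεA hω hd (congrArg Prod.snd hΦ),
    fun _ _ hz hdeg hd => exists_cocycle_Phi_sub_eq_dQ π hεB hz hdeg hd,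
    fun _ _ hω hd ⟨_, _, hw, hΦ⟩ =>
      exists_atD_eq_of_ev1_eq_d hεA hω hd hw.2 (congrArg Prod.snd hΦ)⟩

theorem stmt_16 (A B : CDGA)
    (εA : A.carrier →ₗ[ℚ] A.carrier)
    (hεA : ∀ (n : ℕ) (a : A.carrier), a ∈ A.grading n → εA a = ((-1 : ℚ) ^ n) • a)
    (εB : B.carrier →ₗ[ℚ] B.carrier)
    (hεB : ∀ (n : ℕ) (b : B.carrier), b ∈ B.grading n → εB b = ((-1 : ℚ) ^ n) • b)
    (π : CDGAHom A B) (hπsurj : Function.Surjective π.toFun)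
    (hπqis : IsQuasiIso A B π) :
    -- `Φ` is a morphism of cdgas into the pullback `Q` …
    (∀ ω : ATc A, Phi A B π ω ∈ Qset A B π) ∧
    (Phi A B π (1, 0) = ((1, 0), 1)) ∧
    (∀ ω ω' : ATc A, Phi A B π (ω + ω') = Phi A B π ω + Phi A B π ω') ∧
    (∀ ω ω' : ATc A,
      Phi A B π (atMul A εA ω ω') = qmul A B εB (Phi A B π ω) (Phi A B π ω')) ∧
    (∀ ω : ATc A, Phi A B π (atD A εA ω) = dQ A B εB (Phi A B π ω)) ∧
    -- … it is surjective onto `Q` …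
    (∀ z ∈ Qset A B π, ∃ ω : ATc A, Phi A B π ω = z) ∧
    -- … and it is a quasi-isomorphism onto `Q` (elementwise, in each degree):
    (∀ z ∈ Qset A B π, QDeg A B 0 z → dQ A B εB z = 0 →
      ∃ ω : ATc A, atDeg A 0 ω ∧ atD A εA ω = 0 ∧ Phi A B π ω = z) ∧
    (∀ ω : ATc A, atDeg A 0 ω → atD A εA ω = 0 → Phi A B π ω = 0 → ω = 0) ∧
    (∀ n : ℕ, ∀ z ∈ Qset A B π, QDeg A B (n + 1) z → dQ A B εB z = 0 →
      ∃ ω : ATc A, atDeg A (n + 1) ω ∧ atD A εA ω = 0 ∧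
        ∃ w ∈ Qset A B π, QDeg A B n w ∧ Phi A B π ω - z = dQ A B εB w) ∧
    (∀ n : ℕ, ∀ ω : ATc A, atDeg A (n + 1) ω → atD A εA ω = 0 →
      (∃ w ∈ Qset A B π, QDeg A B n w ∧ Phi A B π ω = dQ A B εB w) →
      ∃ ω' : ATc A, atDeg A n ω' ∧ atD A εA ω' = ω) :=
  stmt_16_general A B εA hεA εB hεB π hπsurj
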